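/- Let M₀ > 0 and M₂ < 0 be real numbers. Define M(r) = M₀ + M₂·r², F(r) = r³·M(r), t_h(r) = 2/(3·√(M(r))) − (2/3)·r³·M(r), R(ρ,t) = ρ·(1 − (3/2)·√(M(ρ))·t)^(2/3), the energy density along the horizon μ(r) = (deriv F r) / ( R(r, t_h(r))² · deriv (fun ρ => R(ρ, t_h(r))) r ), and the electric Weyl scalar along the horizon 𝓔(r) = μ(r)/3 − F(r)/R(r, t_h(r))³. Then the function r ↦ 𝓔(r)/μ(r) tends to −∞ as r tends to 0 from the right (i.e. along the filter 𝓝[>] 0); in particular r ↦ |𝓔(r)|/μ(r) tends to +∞. -/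

import Mathlib

open Filter

/-- Mass function of the LTB model: `M(r) = M₀ + M₂ r²`. -/
noncomputable def ltbM (M₀ M₂ r : ℝ) : ℝ := M₀ + M₂ * r ^ 2

/-- Misner–Sharp mass: `F(r) = r³ M(r)`. -/
noncomputable def ltbF (M₀ M₂ r : ℝ) : ℝ := r ^ 3 * ltbM M₀ M₂ r

/-- Apparent-horizon time: `t_h(r) = 2/(3√M(r)) − (2/3) r³ M(r)`. -/
noncomputable def ltbTh (M₀ M₂ r : ℝ) : ℝ :=
  2 / (3 * Real.sqrt (ltbM M₀ M₂ r)) - (2/3) * r ^ 3 * ltbM M₀ M₂ r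

/-- Area radius: `R(ρ,t) = ρ (1 − (3/2)√M(ρ) t)^(2/3)`. -/
noncomputable def ltbR (M₀ M₂ ρ t : ℝ) : ℝ :=
  ρ * (1 - (3/2) * Real.sqrt (ltbM M₀ M₂ ρ) * t) ^ ((2:ℝ)/3)

/-- Energy density along the apparent horizon, from the field equation
`F′ = μ R² R′`: `μ(r) = F′/(R² R′)` evaluated at `(r, t_h(r))`. -/
noncomputable def ltbMu (M₀ M₂ r : ℝ) : ℝ :=
  deriv (ltbF M₀ M₂) r /
    ((ltbR M₀ M₂ r (ltbTh M₀ M₂ r)) ^ 2 *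
      deriv (fun ρ => ltbR M₀ M₂ ρ (ltbTh M₀ M₂ r)) r)

/-- Electric Weyl scalar along the apparent horizon:
`𝓔(r) = μ(r)/3 − F(r)/R(r, t_h(r))³`. -/
noncomputable def ltbE (M₀ M₂ r : ℝ) : ℝ :=
  ltbMu M₀ M₂ r / 3 - ltbF M₀ M₂ r / (ltbR M₀ M₂ r (ltbTh M₀ M₂ r)) ^ 3

/-!
On the apparent horizon `1 - (3/2)√M t_h = (r√M)³`, so `R = F` there and the field equation turns
`𝓔/μ` into `1/3 - R′/F′`. Explicitly `R′/F′ = r⁻¹ c(r)` with `c` continuous and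
`c(0) = -2M₂/(9 M₀² √M₀) > 0`, so `R′/F′ → +∞` as `r → 0⁺`. In particular `μ > 0` near the centre,
hence `|𝓔|/μ = -𝓔/μ`.
-/

open Topology

theorem tendsto_abs_div_atTop_of_div_atBot {α : Type*} {l : Filter α} {f g : α → ℝ}
    (h : Tendsto (fun x => f x / g x) l atBot) (hg : ∀ᶠ x in l, 0 < g x) :
    Tendsto (fun x => |f x| / g x) l atTop := by
  refine (tendsto_neg_atBot_atTop.comp h).congr' ?_
  filter_upwards [hg, h.eventually (eventually_lt_atBot 0)] with x hgx hfg
  have hf : f x < 0 := by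
    by_contra! hf
    exact hfg.not_ge (div_nonneg hf hgx.le)
  simp [abs_of_neg hf, neg_div]

section Horizon

variable {M₀ M₂ : ℝ}

theorem one_sub_mul_ltbTh {r : ℝ} (hm : 0 < ltbM M₀ M₂ r) :
    1 - (3/2) * √(ltbM M₀ M₂ r) * ltbTh M₀ M₂ r = (r * √(ltbM M₀ M₂ r)) ^ 3 := by
  have hsq : √(ltbM M₀ M₂ r) ^ 2 = ltbM M₀ M₂ r := Real.sq_sqrt hm.le
  unfold ltbTh
  field_simp
  linear_combination (-(r ^ 3 * √(ltbM M₀ M₂ r))) * hsq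

theorem ltbR_ltbTh {r : ℝ} (hr : 0 ≤ r) (hm : 0 < ltbM M₀ M₂ r) :
    ltbR M₀ M₂ r (ltbTh M₀ M₂ r) = ltbF M₀ M₂ r := by
  have hs : 0 ≤ r * √(ltbM M₀ M₂ r) := mul_nonneg hr (Real.sqrt_nonneg _)
  rw [ltbR, one_sub_mul_ltbTh hm, ← Real.rpow_natCast, ← Real.rpow_mul hs]
  norm_num
  rw [mul_pow, Real.sq_sqrt hm.le, ltbF]
  ring

theorem hasDerivAt_ltbM (r : ℝ) : HasDerivAt (ltbM M₀ M₂) (2 * M₂ * r) r :=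
  (((hasDerivAt_pow 2 r).const_mul M₂).const_add M₀).congr_deriv (by push_cast; ring)

@[simp]
theorem ltbM_zero : ltbM M₀ M₂ 0 = M₀ := by
  simp [ltbM]

@[fun_prop]
theorem continuous_ltbM : Continuous (ltbM M₀ M₂) :=
  continuous_iff_continuousAt.2 fun r => (hasDerivAt_ltbM r).continuousAt

theorem hasDerivAt_ltbF (r : ℝ) :
    HasDerivAt (ltbF M₀ M₂) (r ^ 2 * (3 * M₀ + 5 * M₂ * r ^ 2)) r :=
  ((hasDerivAt_pow 3 r).mul (hasDerivAt_ltbM r)).congr_deriv (by simp only [ltbM]; push_cast; ring)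

theorem hasDerivAt_ltbR {r t : ℝ} (hm : ltbM M₀ M₂ r ≠ 0)
    (hu : 1 - (3/2) * √(ltbM M₀ M₂ r) * t ≠ 0) :
    HasDerivAt (fun ρ => ltbR M₀ M₂ ρ t)
      ((1 - (3/2) * √(ltbM M₀ M₂ r) * t) ^ ((2:ℝ)/3)
        - r ^ 2 * M₂ * t / √(ltbM M₀ M₂ r)
          * (1 - (3/2) * √(ltbM M₀ M₂ r) * t) ^ ((2:ℝ)/3 - 1)) r := by
  have hu' := ((((hasDerivAt_ltbM r).sqrt hm).const_mul (3/2)).mul_const t).const_sub 1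
  refine ((hasDerivAt_id' r).mul (hu'.rpow_const (p := (2:ℝ)/3) (Or.inl hu))).congr_deriv ?_
  field_simp
  ring

theorem deriv_ltbR_ltbTh {r : ℝ} (hr : 0 < r) (hm : 0 < ltbM M₀ M₂ r) :
    deriv (fun ρ => ltbR M₀ M₂ ρ (ltbTh M₀ M₂ r)) r
      = r ^ 2 * ltbM M₀ M₂ r - r * M₂ * ltbTh M₀ M₂ r / ltbM M₀ M₂ r := by
  have hs : 0 < r * √(ltbM M₀ M₂ r) := mul_pos hr (Real.sqrt_pos.mpr hm)
  have hu := one_sub_mul_ltbTh (M₀ := M₀) (M₂ := M₂) hm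
  rw [(hasDerivAt_ltbR hm.ne' (hu ▸ (pow_pos hs 3).ne')).deriv, hu, ← Real.rpow_natCast,
    ← Real.rpow_mul hs.le, ← Real.rpow_mul hs.le]
  norm_num
  rw [Real.rpow_neg_one, mul_pow, Real.sq_sqrt hm.le]
  field_simp
  linear_combination (M₂ * ltbTh M₀ M₂ r) * Real.sq_sqrt hm.le

theorem deriv_ltbR_div_deriv_ltbF {r : ℝ} (hr : 0 < r) (hm : 0 < ltbM M₀ M₂ r) :
    deriv (fun ρ => ltbR M₀ M₂ ρ (ltbTh M₀ M₂ r)) r / deriv (ltbF M₀ M₂) r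
      = r⁻¹ * ((r * ltbM M₀ M₂ r - M₂ * ltbTh M₀ M₂ r / ltbM M₀ M₂ r)
          / (3 * M₀ + 5 * M₂ * r ^ 2)) := by
  rw [deriv_ltbR_ltbTh hr hm, (hasDerivAt_ltbF r).deriv]
  by_cases hq : 3 * M₀ + 5 * M₂ * r ^ 2 = 0
  · simp [hq]
  · field_simp

theorem ltbE_div_ltbMu {r : ℝ} (hr : 0 < r) (hm : 0 < ltbM M₀ M₂ r)
    (h : deriv (fun ρ => ltbR M₀ M₂ ρ (ltbTh M₀ M₂ r)) r / deriv (ltbF M₀ M₂) r ≠ 0) :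
    ltbE M₀ M₂ r / ltbMu M₀ M₂ r
      = 1 / 3 - deriv (fun ρ => ltbR M₀ M₂ ρ (ltbTh M₀ M₂ r)) r / deriv (ltbF M₀ M₂) r := by
  obtain ⟨hR', hF'⟩ := div_ne_zero_iff.mp h
  have hF : ltbF M₀ M₂ r ≠ 0 := (mul_pos (pow_pos hr 3) hm).ne'
  rw [ltbE, ltbMu, ltbR_ltbTh hr.le hm]
  field_simp

theorem ltbMu_pos {r : ℝ} (hr : 0 < r) (hm : 0 < ltbM M₀ M₂ r)
    (h : 0 < deriv (fun ρ => ltbR M₀ M₂ ρ (ltbTh M₀ M₂ r)) r / deriv (ltbF M₀ M₂) r) :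
    0 < ltbMu M₀ M₂ r := by
  have hF : 0 < ltbF M₀ M₂ r := mul_pos (pow_pos hr 3) hm
  rw [ltbMu, ltbR_ltbTh hr.le hm, div_mul_eq_div_div_swap]
  exact div_pos (inv_div _ (deriv (ltbF M₀ M₂) r) ▸ inv_pos.2 h) (pow_pos hF 2)

theorem continuousAt_ltbTh {r : ℝ} (hm : 0 < ltbM M₀ M₂ r) : ContinuousAt (ltbTh M₀ M₂) r := by
  show ContinuousAt (fun r => 2 / (3 * √(ltbM M₀ M₂ r)) - 2 / 3 * r ^ 3 * ltbM M₀ M₂ r) r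
  fun_prop (disch := simp [Real.sqrt_ne_zero', hm])

theorem eventually_ltbM_pos (hM₀ : 0 < M₀) : ∀ᶠ r in 𝓝 0, 0 < ltbM M₀ M₂ r := by
  have : Tendsto (ltbM M₀ M₂) (𝓝 0) (𝓝 M₀) := by
    simpa using continuous_ltbM.tendsto (0 : ℝ)
  exact this.eventually (eventually_gt_nhds hM₀)

theorem tendsto_deriv_ltbR_div_deriv_ltbF (hM₀ : 0 < M₀) (hM₂ : M₂ < 0) :
    Tendsto (fun r => deriv (fun ρ => ltbR M₀ M₂ ρ (ltbTh M₀ M₂ r)) r / deriv (ltbF M₀ M₂) r)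
      (𝓝[>] 0) atTop := by
  set c : ℝ → ℝ := fun r =>
    (r * ltbM M₀ M₂ r - M₂ * ltbTh M₀ M₂ r / ltbM M₀ M₂ r) / (3 * M₀ + 5 * M₂ * r ^ 2)
  have hTh : ContinuousAt (ltbTh M₀ M₂) 0 := continuousAt_ltbTh (by simpa using hM₀)
  have hc : ContinuousAt c 0 := by
    fun_prop (disch := simp [hM₀.ne'])
  have hc0 : 0 < c 0 := by
    have : 0 < -M₂ * (2 / (3 * √M₀)) / M₀ / (3 * M₀) := by
      have hs : 0 < √M₀ := Real.sqrt_pos.2 hM₀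
      have hM₂' : 0 < -M₂ := neg_pos.2 hM₂
      positivity
    simpa [c, ltbTh, ltbM, neg_div] using this
  refine (tendsto_inv_nhdsGT_zero.atTop_mul_pos hc0 (hc.tendsto.mono_left nhdsWithin_le_nhds)).congr' ?_
  filter_upwards [self_mem_nhdsWithin, nhdsWithin_le_nhds (eventually_ltbM_pos hM₀)] with r hr hm
  exact (deriv_ltbR_div_deriv_ltbF hr hm).symm

end Horizon

/-- LTB instantiation of Proposition 4: for `M₂ < 0` (marginally naked central
singularity), the ratio `𝓔/μ` tends to `−∞` along the apparent horizon as
`r → 0⁺`; in particular `|𝓔|/μ` tends to `+∞`. -/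
theorem ltb_weyl_ratio_diverges (M₀ M₂ : ℝ) (hM₀ : 0 < M₀) (hM₂ : M₂ < 0) :
    Tendsto (fun r : ℝ => ltbE M₀ M₂ r / ltbMu M₀ M₂ r)
      (nhdsWithin 0 (Set.Ioi 0)) atBot ∧
    Tendsto (fun r : ℝ => |ltbE M₀ M₂ r| / ltbMu M₀ M₂ r)
      (nhdsWithin 0 (Set.Ioi 0)) atTop := by
  have hlim := tendsto_deriv_ltbR_div_deriv_ltbF hM₀ hM₂
  have hev : ∀ᶠ r in 𝓝[>] 0, 0 < r ∧ 0 < ltbM M₀ M₂ r ∧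
      0 < deriv (fun ρ => ltbR M₀ M₂ ρ (ltbTh M₀ M₂ r)) r / deriv (ltbF M₀ M₂) r := by
    filter_upwards [self_mem_nhdsWithin, nhdsWithin_le_nhds (eventually_ltbM_pos hM₀),
      hlim.eventually (eventually_gt_atTop 0)] with r hr hm hpos
    exact ⟨hr, hm, hpos⟩
  have hratio : Tendsto (fun r => ltbE M₀ M₂ r / ltbMu M₀ M₂ r) (𝓝[>] 0) atBot := by
    refine (tendsto_atBot_add_const_left _ (1 / 3) (tendsto_neg_atTop_atBot.comp hlim)).congr' ?_
    filter_upwards [hev] with r ⟨hr, hm, hpos⟩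
    rw [ltbE_div_ltbMu hr hm hpos.ne']
    rfl
  refine ⟨hratio, tendsto_abs_div_atTop_of_div_atBot hratio ?_⟩
  filter_upwards [hev] with r ⟨hr, hm, hpos⟩
  exact ltbMu_pos hr hm hpos
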